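/- For every k ∈ ℤ and all λ, μ > u, the A₁ period functions satisfy (−1)^{k+1} · I⁽ᵏ⁺¹⁾(λ) · I⁽⁻¹⁻ᵏ⁾(μ) = 2 · (λ−u)^{−k−3/2} · (μ−u)^{k+1/2}. (Summing over k ∈ ℤ, this family of identities expresses the symplectic pairing Ω(φ_{A₁}(u,λ;z), f_{A₁}(u,μ;z)) = Σ_{k∈ℤ} (−1)^{k+1} I⁽ᵏ⁺¹⁾(λ) I⁽⁻¹⁻ᵏ⁾(μ) as 2 (μ−u)^{1/2} (λ−u)^{−1/2} δ(λ−u, μ−u), where δ(x,y) = Σ_{n∈ℤ} x^n y^{−n−1} is the formal delta-function; this is the key identity in the proof of Lemma 4.3 of the paper.) -/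

import Mathlib

/-!
Each period function is a constant times a power, `I⁽ᵏ⁾(λ) = c_k (λ−u)^{−k−1/2}`, and the
double factorials and powers of two in the coefficients cancel in pairs:
`c_j c_{−j} = 2 (−1)^j`. The identity is this cancellation with `j = k + 1`.
-/

/-- The A₁ period function I⁽ᵏ⁾, k ∈ ℤ. -/
noncomputable def periodA1 (u : ℝ) (k : ℤ) (lam : ℝ) : ℝ :=
  if 0 ≤ k then
    (-1 : ℝ) ^ k.toNat * (Nat.doubleFactorial (2 * k.toNat - 1) : ℝ) *
      (2 : ℝ) ^ ((1 : ℝ) / 2 - (k.toNat : ℝ)) *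
      (lam - u) ^ (-(k.toNat : ℝ) - 1 / 2)
  else
    (2 : ℝ) ^ (((-k - 1).toNat : ℝ) + 3 / 2) /
      (Nat.doubleFactorial (2 * (-k - 1).toNat + 1) : ℝ) *
      (lam - u) ^ (((-k - 1).toNat : ℝ) + 1 / 2)

noncomputable def periodA1Coeff (k : ℤ) : ℝ :=
  if 0 ≤ k then
    (-1 : ℝ) ^ k.toNat * (Nat.doubleFactorial (2 * k.toNat - 1) : ℝ) *
      (2 : ℝ) ^ ((1 : ℝ) / 2 - (k.toNat : ℝ))
  else
    (2 : ℝ) ^ (((-k - 1).toNat : ℝ) + 3 / 2) /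
      (Nat.doubleFactorial (2 * (-k - 1).toNat + 1) : ℝ)

theorem periodA1_eq_coeff_mul_rpow (u : ℝ) (k : ℤ) (lam : ℝ) :
    periodA1 u k lam = periodA1Coeff k * (lam - u) ^ (-(k : ℝ) - 1 / 2) := by
  unfold periodA1 periodA1Coeff
  split_ifs with hk
  · rw [show ((k.toNat : ℕ) : ℝ) = k by exact_mod_cast Int.toNat_of_nonneg hk]
  · rw [show (((-k - 1).toNat : ℕ) : ℝ) = -k - 1 by
      exact_mod_cast Int.toNat_of_nonneg (by omega)]
    ring_nf

theorem periodA1Coeff_natCast (n : ℕ) :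
    periodA1Coeff n =
      (-1 : ℝ) ^ n * (Nat.doubleFactorial (2 * n - 1) : ℝ) * (2 : ℝ) ^ ((1 : ℝ) / 2 - n) := by
  simp [periodA1Coeff]

theorem periodA1Coeff_neg_natCast_sub_one (n : ℕ) :
    periodA1Coeff (-n - 1) =
      (2 : ℝ) ^ ((n : ℝ) + 3 / 2) / (Nat.doubleFactorial (2 * n + 1) : ℝ) := by
  rw [periodA1Coeff, if_neg (by omega), show -(-(n : ℤ) - 1) - 1 = n by ring, Int.toNat_natCast]

theorem periodA1Coeff_succ_mul_neg (n : ℕ) :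
    periodA1Coeff (n + 1) * periodA1Coeff (-(n + 1)) = (-1) ^ (n + 1) * 2 := by
  rw [show ((n : ℤ) + 1) = ((n + 1 : ℕ) : ℤ) by push_cast; rfl, periodA1Coeff_natCast,
    show -((n + 1 : ℕ) : ℤ) = -n - 1 by push_cast; ring, periodA1Coeff_neg_natCast_sub_one,
    show 2 * (n + 1) - 1 = 2 * n + 1 by omega]
  have hfact : (Nat.doubleFactorial (2 * n + 1) : ℝ) ≠ 0 := by positivity
  have hpow : (2 : ℝ) ^ ((1 : ℝ) / 2 - (n + 1 : ℕ)) * (2 : ℝ) ^ ((n : ℝ) + 3 / 2) = 2 := by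
    rw [← Real.rpow_add two_pos,
      show (1 : ℝ) / 2 - (n + 1 : ℕ) + (n + 3 / 2) = 1 by push_cast; ring, Real.rpow_one]
  calc _ = (-1) ^ (n + 1) *
        ((2 : ℝ) ^ ((1 : ℝ) / 2 - (n + 1 : ℕ)) * (2 : ℝ) ^ ((n : ℝ) + 3 / 2)) *
        ((Nat.doubleFactorial (2 * n + 1) : ℝ) / (Nat.doubleFactorial (2 * n + 1) : ℝ)) := by
        ring
    _ = (-1) ^ (n + 1) * 2 := by rw [hpow, div_self hfact, mul_one]

theorem periodA1Coeff_zero_mul_self : periodA1Coeff 0 * periodA1Coeff 0 = 2 := by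
  rw [← Nat.cast_zero, periodA1Coeff_natCast]
  norm_num
  rw [← Real.rpow_add two_pos]
  norm_num

theorem periodA1Coeff_mul_neg (j : ℤ) :
    periodA1Coeff j * periodA1Coeff (-j) = (-1) ^ j * 2 := by
  obtain ⟨n, rfl | rfl⟩ := Int.eq_nat_or_neg j
  · rcases n with _ | n
    · simpa using periodA1Coeff_zero_mul_self
    · exact_mod_cast periodA1Coeff_succ_mul_neg n
  · rcases n with _ | n
    · simpa using periodA1Coeff_zero_mul_self
    · rw [neg_neg, mul_comm, zpow_neg, ← inv_zpow, inv_neg, inv_one]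
      exact_mod_cast periodA1Coeff_succ_mul_neg n

theorem periodA1_delta_identity_general (u : ℝ) (k : ℤ) (lam mu : ℝ) :
    (-1 : ℝ) ^ (k + 1) * periodA1 u (k + 1) lam * periodA1 u (-1 - k) mu
      = 2 * (lam - u) ^ (-(k : ℝ) - 3 / 2) * (mu - u) ^ ((k : ℝ) + 1 / 2) := by
  have hsign : (-1 : ℝ) ^ (k + 1) * (-1) ^ (k + 1) = 1 := by
    rw [← mul_zpow]; norm_num
  rw [show -1 - k = -(k + 1) by ring, periodA1_eq_coeff_mul_rpow, periodA1_eq_coeff_mul_rpow,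
    show -(((k + 1 : ℤ)) : ℝ) - 1 / 2 = -(k : ℝ) - 3 / 2 by push_cast; ring,
    show -((-(k + 1) : ℤ) : ℝ) - 1 / 2 = (k : ℝ) + 1 / 2 by push_cast; ring]
  set X := (lam - u) ^ (-(k : ℝ) - 3 / 2)
  set Y := (mu - u) ^ ((k : ℝ) + 1 / 2)
  linear_combination ((-1 : ℝ) ^ (k + 1) * X * Y) * periodA1Coeff_mul_neg (k + 1) + 2 * X * Y * hsign

/-- For every k ∈ ℤ and λ, μ > u:
(−1)^{k+1} I⁽ᵏ⁺¹⁾(λ) I⁽⁻¹⁻ᵏ⁾(μ) = 2 (λ−u)^{−k−3/2} (μ−u)^{k+1/2}. -/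
theorem periodA1_delta_identity (u : ℝ) (k : ℤ) (lam mu : ℝ)
    (hlam : u < lam) (hmu : u < mu) :
    (-1 : ℝ) ^ (k + 1) * periodA1 u (k + 1) lam * periodA1 u (-1 - k) mu
      = 2 * (lam - u) ^ (-(k : ℝ) - 3 / 2) * (mu - u) ^ ((k : ℝ) + 1 / 2) :=
  periodA1_delta_identity_general u k lam mu
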